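/- Let m ∈ ℝ∖{0}, let ν₁, ν₂ ∈ ℤ + 1/2 be half odd integers, and let s, s′ ∈ {1, i}. For r > 0 put P(r) := Re ∫_0^{2π} Ẑ^s_{ν₁}(r,θ)·Ẑ^{s′}_{ν₂}(r,θ)·i·r·e^{iθ} dθ (the real part of the contour integral of the spinor-power product along the circle of radius r around 0, lifted to the double cover). Then: if ν₁ + ν₂ = −1 and the pair {s, s′} equals {1, i} (in either order), P(r) = −2π for every r > 0; in all other cases (i.e. if (s,s′) ∈ {(1,1),(i,i)} or ν₁ + ν₂ ≠ −1), P(r) = 0 for every r > 0. In particular P(r) is independent of r. -/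

import Mathlib

open Complex Topology intervalIntegral

/-- The modified Bessel function of the first kind
`I_ν(x) = Σ_{k=0}^∞ (x/2)^{2k+ν}/(k!·Γ(k+ν+1))` (for `x > 0`). -/
noncomputable def besselI (ν x : ℝ) : ℝ :=
  ∑' k : ℕ, (x / 2) ^ (2 * (k : ℝ) + ν) / ((k.factorial : ℝ) * Real.Gamma ((k : ℝ) + ν + 1))



/-- auxiliary: half integers are not negative integers -/
lemma halfint_ne_negnat {ν : ℝ} (h : ∃ k : ℤ, ν = (k : ℝ) + 1 / 2) (n : ℕ) : ν ≠ -n := by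
  obtain ⟨k, rfl⟩ := h
  intro hc
  have : (2 * k + 1 : ℝ) = -(2 * n) := by linarith
  have : (2 * k + 1 : ℤ) = -(2 * n) := by exact_mod_cast this
  omega

lemma halfint_ne_zero {ν : ℝ} (h : ∃ k : ℤ, ν = (k : ℝ) + 1 / 2) : ν ≠ 0 := by
  simpa using halfint_ne_negnat h 0

lemma halfint_gamma_ne_zero {ν : ℝ} (h : ∃ k : ℤ, ν = (k : ℝ) + 1 / 2) : Real.Gamma ν ≠ 0 :=
  Real.Gamma_ne_zero (halfint_ne_negnat h)

lemma halfint_add_int {ν : ℝ} (h : ∃ k : ℤ, ν = (k : ℝ) + 1 / 2) (j : ℤ) :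
    ∃ k : ℤ, ν + j = (k : ℝ) + 1 / 2 := by
  obtain ⟨k, rfl⟩ := h; exact ⟨k + j, by push_cast; ring⟩

lemma halfint_nat_add {ν : ℝ} (h : ∃ k : ℤ, ν = (k : ℝ) + 1 / 2) (n : ℕ) :
    ∃ k : ℤ, (n : ℝ) + ν = (k : ℝ) + 1 / 2 := by
  obtain ⟨k, rfl⟩ := h; exact ⟨k + n, by push_cast; ring⟩

lemma halfint_kν1 {ν : ℝ} (h : ∃ k : ℤ, ν = (k : ℝ) + 1 / 2) (n : ℕ) :
    ∃ k : ℤ, (n : ℝ) + ν + 1 = (k : ℝ) + 1 / 2 := by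
  obtain ⟨k, rfl⟩ := h; exact ⟨k + n + 1, by push_cast; ring⟩

lemma halfint_neg {ν : ℝ} (h : ∃ k : ℤ, ν = (k : ℝ) + 1 / 2) :
    ∃ k : ℤ, -ν = (k : ℝ) + 1 / 2 := by
  obtain ⟨k, rfl⟩ := h; exact ⟨-k - 1, by push_cast; ring⟩

/-- the `k`-th term of the Bessel series -/
noncomputable def bterm (ν x : ℝ) (k : ℕ) : ℝ :=
  (x / 2) ^ (2 * (k : ℝ) + ν) / ((k.factorial : ℝ) * Real.Gamma ((k : ℝ) + ν + 1))

lemma besselI_eq_tsum (ν x : ℝ) : besselI ν x = ∑' k, bterm ν x k := rfl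

lemma bterm_succ {ν x : ℝ} (h : ∃ k : ℤ, ν = (k : ℝ) + 1 / 2) (hx : 0 < x) (k : ℕ) :
    bterm ν x (k + 1) = (x / 2) ^ (2 : ℕ) / (((k : ℝ) + 1) * ((k : ℝ) + ν + 1)) * bterm ν x k := by
  have hx2 : (0 : ℝ) < x / 2 := by linarith
  have hG : Real.Gamma ((k : ℝ) + ν + 1 + 1) = ((k : ℝ) + ν + 1) * Real.Gamma ((k : ℝ) + ν + 1) :=
    Real.Gamma_add_one (halfint_ne_zero (halfint_kν1 h k))
  have hGne : Real.Gamma ((k : ℝ) + ν + 1) ≠ 0 :=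
    halfint_gamma_ne_zero (halfint_kν1 h k)
  have hkν : ((k : ℝ) + ν + 1) ≠ 0 := halfint_ne_zero (halfint_kν1 h k)
  have hpow : (x / 2) ^ (2 * ((k : ℝ) + 1) + ν) = (x / 2) ^ (2 * (k : ℝ) + ν) * (x / 2) ^ (2 : ℕ) := by
    rw [← Real.rpow_natCast (x / 2) 2, ← Real.rpow_add hx2]
    congr 1
    push_cast
    ring
  unfold bterm
  push_cast
  rw [show ((k : ℝ) + 1 + ν + 1) = ((k : ℝ) + ν + 1) + 1 by ring, hG, hpow,
    Nat.factorial_succ]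
  push_cast
  field_simp

lemma summable_bterm {ν x : ℝ} (h : ∃ k : ℤ, ν = (k : ℝ) + 1 / 2) (hx : 0 < x) :
    Summable (bterm ν x) := by
  obtain ⟨N, hN⟩ := exists_nat_gt (2 * (x / 2) ^ (2 : ℕ) + |ν|)
  apply summable_of_ratio_norm_eventually_le (r := 1 / 2) (by norm_num)
  filter_upwards [Filter.eventually_ge_atTop N] with k hk
  rw [bterm_succ h hx k]
  have hpos : (0 : ℝ) < (x / 2) ^ (2 : ℕ) := by positivity
  have h1 : (N : ℝ) ≤ k := by exact_mod_cast hk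
  have hb : 2 * (x / 2) ^ (2 : ℕ) + |ν| < (k : ℝ) := lt_of_lt_of_le hN (by exact_mod_cast hk)
  have habs : -|ν| ≤ ν := neg_abs_le ν
  have hden : 2 * (x / 2) ^ (2 : ℕ) ≤ ((k : ℝ) + ν + 1) := by
    nlinarith [abs_nonneg ν]
  have hden2 : ((k : ℝ) + ν + 1) ≤ ((k : ℝ) + 1) * ((k : ℝ) + ν + 1) := by
    nlinarith [Nat.cast_nonneg (α := ℝ) k, abs_nonneg ν, hpos]
  have hq : (x / 2) ^ (2 : ℕ) / (((k : ℝ) + 1) * ((k : ℝ) + ν + 1)) ≤ 1 / 2 := by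
    rw [div_le_div_iff₀ (by nlinarith) (by norm_num)]
    nlinarith
  rw [norm_mul]
  have hnrm : ‖(x / 2) ^ (2 : ℕ) / (((k : ℝ) + 1) * ((k : ℝ) + ν + 1))‖ ≤ 1 / 2 := by
    have hd : (0:ℝ) < ((k : ℝ) + 1) * ((k : ℝ) + ν + 1) := by nlinarith
    rw [Real.norm_of_nonneg (le_of_lt (div_pos hpos hd))]
    exact hq
  calc ‖(x / 2) ^ (2 : ℕ) / (((k : ℝ) + 1) * ((k : ℝ) + ν + 1))‖ * ‖bterm ν x k‖
      ≤ (1 / 2) * ‖bterm ν x k‖ := by gcongr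

lemma halfint_shift {ν : ℝ} (h : ∃ k : ℤ, ν = (k : ℝ) + 1 / 2) {t : ℝ} (j : ℤ)
    (ht : t = ν + j) : ∃ k : ℤ, t = (k : ℝ) + 1 / 2 := by
  obtain ⟨k, rfl⟩ := h; exact ⟨k + j, by rw [ht]; push_cast; ring⟩

lemma rpow_shift {x : ℝ} (hx : 0 < x) (s t : ℝ) (h : t = s + 1) : x ^ t = x ^ s * x := by
  rw [h, Real.rpow_add hx, Real.rpow_one]

lemma besselI_rec {ν x : ℝ} (h : ∃ k : ℤ, ν = (k : ℝ) + 1 / 2) (hx : 0 < x) :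
    besselI (ν - 1) x = 2 * ν / x * besselI ν x + besselI (ν + 1) x := by
  have hx2 : (0 : ℝ) < x / 2 := by linarith
  have hxne : x ≠ 0 := ne_of_gt hx
  have hν : ν ≠ 0 := halfint_ne_zero h
  have hGν : Real.Gamma ν ≠ 0 := halfint_gamma_ne_zero h
  have h1 : ∃ k : ℤ, ν + 1 = (k : ℝ) + 1 / 2 := halfint_shift h 1 (by push_cast; ring)
  have hm1 : ∃ k : ℤ, ν - 1 = (k : ℝ) + 1 / 2 := halfint_shift h (-1) (by push_cast; ring)
  have hsumν : Summable (bterm ν x) := summable_bterm h hx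
  have hsumν1 : Summable (bterm (ν + 1) x) := summable_bterm h1 hx
  set f : ℕ → ℝ := fun k => if k = 0 then 0 else bterm (ν + 1) x (k - 1) with hfdef
  have hfshift : (fun n => f (n + 1)) = bterm (ν + 1) x := by
    funext n; simp [hfdef]
  have hf : Summable f := by
    apply (summable_nat_add_iff 1).mp
    rw [hfshift]; exact hsumν1
  have key : ∀ k : ℕ, bterm (ν - 1) x k = 2 * ν / x * bterm ν x k + f k := by
    intro k
    cases k with
    | zero =>
        have e1 : bterm (ν - 1) x 0 = (x / 2) ^ (ν - 1) / Real.Gamma ν := by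
          unfold bterm
          norm_num
        have e2 : bterm ν x 0 = (x / 2) ^ (ν - 1) * (x / 2) / Real.Gamma (ν + 1) := by
          unfold bterm
          norm_num
          rw [rpow_shift hx2 (ν - 1) ν (by ring)]
        rw [e1, e2, hfdef]
        simp only [if_pos rfl, add_zero, ↓reduceIte]
        rw [Real.Gamma_add_one hν]
        field_simp
    | succ k =>
        have hkν : ((k : ℝ) + ν + 1) ≠ 0 := halfint_ne_zero (halfint_kν1 h k)
        have hGk : Real.Gamma ((k : ℝ) + ν + 1) ≠ 0 := halfint_gamma_ne_zero (halfint_kν1 h k)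
        have hG2 : Real.Gamma ((k : ℝ) + ν + 2) = ((k : ℝ) + ν + 1) * Real.Gamma ((k : ℝ) + ν + 1) := by
          rw [show (k : ℝ) + ν + 2 = ((k : ℝ) + ν + 1) + 1 by ring, Real.Gamma_add_one hkν]
        have e1 : bterm (ν - 1) x (k + 1)
            = (x / 2) ^ (2 * (k : ℝ) + ν + 1) / ((k + 1).factorial * Real.Gamma ((k : ℝ) + ν + 1)) := by
          unfold bterm
          push_cast
          rw [show (2 * ((k : ℝ) + 1) + (ν - 1)) = 2 * (k : ℝ) + ν + 1 by ring,
            show ((k : ℝ) + 1 + (ν - 1) + 1) = (k : ℝ) + ν + 1 by ring]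
        have e2 : bterm ν x (k + 1)
            = (x / 2) ^ (2 * (k : ℝ) + ν + 1) * (x / 2)
              / ((k + 1).factorial * (((k : ℝ) + ν + 1) * Real.Gamma ((k : ℝ) + ν + 1))) := by
          unfold bterm
          push_cast
          rw [show ((k : ℝ) + 1 + ν + 1) = (k : ℝ) + ν + 2 by ring, hG2,
            rpow_shift hx2 (2 * (k : ℝ) + ν + 1) (2 * ((k : ℝ) + 1) + ν) (by ring)]
        have e3 : f (k + 1)
            = (x / 2) ^ (2 * (k : ℝ) + ν + 1) / (k.factorial * (((k : ℝ) + ν + 1) * Real.Gamma ((k : ℝ) + ν + 1))) := by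
          rw [show f (k + 1) = bterm (ν + 1) x k from congrFun hfshift k]
          unfold bterm
          rw [show (2 * (k : ℝ) + (ν + 1)) = 2 * (k : ℝ) + ν + 1 by ring,
            show ((k : ℝ) + (ν + 1) + 1) = (k : ℝ) + ν + 2 by ring, hG2]
        rw [e1, e2, e3]
        have hfac : ((k + 1).factorial : ℝ) = ((k : ℝ) + 1) * k.factorial := by
          push_cast [Nat.factorial_succ]; ring
        rw [hfac]
        have hkfac : (k.factorial : ℝ) ≠ 0 := by positivity
        have hk1 : ((k : ℝ) + 1) ≠ 0 := by positivity
        field_simp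
        ring
  rw [besselI_eq_tsum, besselI_eq_tsum, besselI_eq_tsum]
  calc ∑' k, bterm (ν - 1) x k = ∑' k, (2 * ν / x * bterm ν x k + f k) := tsum_congr key
    _ = (∑' k, 2 * ν / x * bterm ν x k) + ∑' k, f k :=
        Summable.tsum_add (hsumν.mul_left _) hf
    _ = 2 * ν / x * ∑' k, bterm ν x k + ∑' k, bterm (ν + 1) x k := by
        rw [tsum_mul_left]
        congr 1
        rw [Summable.tsum_eq_zero_add hf, hfshift]
        simp [hfdef]


lemma Gamma_nat_add_half (n : ℕ) :
    Real.Gamma ((n : ℝ) + 1 / 2)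
      = (2 * n).factorial * Real.sqrt Real.pi / (4 ^ n * n.factorial) := by
  induction n with
  | zero =>
      rw [show ((0 : ℕ) : ℝ) + 1 / 2 = 1 / 2 by norm_num, Real.Gamma_one_half_eq]
      simp
  | succ n ih =>
      have hne : ((n : ℝ) + 1 / 2) ≠ 0 := by positivity
      have : Real.Gamma ((n : ℝ) + 1 / 2 + 1) = ((n : ℝ) + 1 / 2) * Real.Gamma ((n : ℝ) + 1 / 2) :=
        Real.Gamma_add_one hne
      rw [show ((n : ℕ) + 1 : ℕ) = n + 1 from rfl]
      push_cast
      rw [show (n : ℝ) + 1 + 1 / 2 = (n : ℝ) + 1 / 2 + 1 by ring, this, ih]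
      have h2 : (2 * (n + 1)).factorial = (2 * n + 2) * ((2 * n + 1) * (2 * n).factorial) := by
        rw [show 2 * (n + 1) = (2 * n + 1) + 1 by ring, Nat.factorial_succ,
          show (2 * n + 1) = (2 * n) + 1 from rfl, Nat.factorial_succ]
      have h3 : (n + 1).factorial = (n + 1) * n.factorial := Nat.factorial_succ n
      rw [h2, h3]
      have hfac : (n.factorial : ℝ) ≠ 0 := by positivity
      have h4 : (4 : ℝ) ^ (n + 1) = 4 * 4 ^ n := by ring
      push_cast [h4]
      field_simp
      ring

lemma Real.exp_tsum (x : ℝ) : Real.exp x = ∑' n : ℕ, x ^ n / n.factorial := by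
  rw [Real.exp_eq_exp_ℝ, NormedSpace.exp_eq_tsum_div]

lemma Real.sinh_tsum (x : ℝ) :
    Real.sinh x = ∑' k : ℕ, x ^ (2 * k + 1) / (2 * k + 1).factorial := by
  have hs1 : Summable (fun n : ℕ => x ^ n / n.factorial) := Real.summable_pow_div_factorial x
  have hs2 : Summable (fun n : ℕ => (-x) ^ n / n.factorial) := Real.summable_pow_div_factorial (-x)
  have hg : Summable (fun n : ℕ => (x ^ n - (-x) ^ n) / (2 * n.factorial)) := by
    have := (hs1.sub hs2).div_const 2
    convert this using 2 with n
    case e'_5 => ring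
    case e'_3 => rfl
  have heven : ∀ k : ℕ, (x ^ (2 * k) - (-x) ^ (2 * k)) / (2 * (2 * k).factorial) = 0 := by
    intro k
    rw [show (-x) ^ (2 * k) = x ^ (2 * k) by rw [neg_pow]; simp [pow_mul]]
    simp
  have hodd : ∀ k : ℕ, (x ^ (2 * k + 1) - (-x) ^ (2 * k + 1)) / (2 * (2 * k + 1).factorial)
      = x ^ (2 * k + 1) / (2 * k + 1).factorial := by
    intro k
    rw [show (-x) ^ (2 * k + 1) = -(x ^ (2 * k + 1)) by
      rw [neg_pow]; simp [pow_succ, pow_mul]]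
    ring
  have := tsum_even_add_odd (f := fun n : ℕ => (x ^ n - (-x) ^ n) / (2 * n.factorial))
    (hg.comp_injective (mul_right_injective₀ two_ne_zero))
    (hg.comp_injective ((add_left_injective 1).comp (mul_right_injective₀ two_ne_zero)))
  have hL : (Real.exp x - Real.exp (-x)) / 2 = ∑' n : ℕ, (x ^ n - (-x) ^ n) / (2 * n.factorial) := by
    rw [Real.exp_tsum, Real.exp_tsum, ← Summable.tsum_sub hs1 hs2, ← tsum_div_const]
    congr 1; funext n; ring
  rw [Real.sinh_eq, hL, ← this]
  simp only [heven, hodd, tsum_zero, zero_add]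

lemma Real.cosh_tsum (x : ℝ) :
    Real.cosh x = ∑' k : ℕ, x ^ (2 * k) / (2 * k).factorial := by
  have hs1 : Summable (fun n : ℕ => x ^ n / n.factorial) := Real.summable_pow_div_factorial x
  have hs2 : Summable (fun n : ℕ => (-x) ^ n / n.factorial) := Real.summable_pow_div_factorial (-x)
  have hg : Summable (fun n : ℕ => (x ^ n + (-x) ^ n) / (2 * n.factorial)) := by
    have := (hs1.add hs2).div_const 2
    convert this using 2 with n
    case e'_5 => ring
    case e'_3 => rfl
  have heven : ∀ k : ℕ, (x ^ (2 * k) + (-x) ^ (2 * k)) / (2 * (2 * k).factorial)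
      = x ^ (2 * k) / (2 * k).factorial := by
    intro k
    rw [show (-x) ^ (2 * k) = x ^ (2 * k) by rw [neg_pow]; simp [pow_mul]]
    ring
  have hodd : ∀ k : ℕ, (x ^ (2 * k + 1) + (-x) ^ (2 * k + 1)) / (2 * (2 * k + 1).factorial) = 0 := by
    intro k
    rw [show (-x) ^ (2 * k + 1) = -(x ^ (2 * k + 1)) by
      rw [neg_pow]; simp [pow_succ, pow_mul]]
    simp
  have := tsum_even_add_odd (f := fun n : ℕ => (x ^ n + (-x) ^ n) / (2 * n.factorial))
    (hg.comp_injective (mul_right_injective₀ two_ne_zero))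
    (hg.comp_injective ((add_left_injective 1).comp (mul_right_injective₀ two_ne_zero)))
  have hL : (Real.exp x + Real.exp (-x)) / 2 = ∑' n : ℕ, (x ^ n + (-x) ^ n) / (2 * n.factorial) := by
    rw [Real.exp_tsum, Real.exp_tsum, ← Summable.tsum_add hs1 hs2, ← tsum_div_const]
    congr 1; funext n; ring
  rw [Real.cosh_eq, hL, ← this]
  simp only [heven, hodd, tsum_zero, add_zero]

section closed
variable {x : ℝ} (hx : 0 < x)

lemma sqrt_inv_rel (hx : 0 < x) :
    Real.sqrt (2 / (Real.pi * x)) = 1 / (Real.sqrt Real.pi * Real.sqrt (x / 2)) := by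
  have hπ : (0:ℝ) < Real.pi := Real.pi_pos
  rw [show 2 / (Real.pi * x) = 1 / (Real.pi * (x / 2)) by field_simp,
    one_div, Real.sqrt_inv, Real.sqrt_mul (le_of_lt hπ), one_div]

lemma pow_half_split (hx : 0 < x) (k : ℕ) :
    (x / 2) ^ (2 * (k : ℝ) + 1 / 2) = (x / 2) ^ (2 * k) * Real.sqrt (x / 2) := by
  have hx2 : (0:ℝ) < x / 2 := by linarith
  rw [show 2 * (k : ℝ) + 1 / 2 = ((2 * k : ℕ) : ℝ) + 1 / 2 by push_cast; ring,
    Real.rpow_add hx2, Real.rpow_natCast, ← Real.sqrt_eq_rpow]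

lemma besselI_half (hx : 0 < x) :
    besselI (1 / 2) x = Real.sqrt (2 / (Real.pi * x)) * Real.sinh x := by
  have hx2 : (0:ℝ) < x / 2 := by linarith
  have hπ : (0:ℝ) < Real.pi := Real.pi_pos
  set S := Real.sqrt (x / 2) with hSdef
  have hS : 0 < S := Real.sqrt_pos.mpr hx2
  have hS2 : S ^ 2 = x / 2 := Real.sq_sqrt (le_of_lt hx2)
  have hb : 0 < Real.sqrt Real.pi := Real.sqrt_pos.mpr hπ
  rw [besselI_eq_tsum, Real.sinh_tsum, ← tsum_mul_left]
  apply tsum_congr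
  intro k
  unfold bterm
  rw [show (k : ℝ) + 1 / 2 + 1 = ((k + 1 : ℕ) : ℝ) + 1 / 2 by push_cast; ring,
    Gamma_nat_add_half (k + 1), pow_half_split hx k, sqrt_inv_rel hx, ← hSdef]
  have hfacs : ((2 * (k + 1)).factorial : ℝ) = (2 * k + 2) * ((2 * k + 1).factorial) := by
    rw [show 2 * (k + 1) = (2 * k + 1) + 1 by ring, Nat.factorial_succ]
    push_cast; ring
  have hfac1 : ((k + 1).factorial : ℝ) = ((k : ℝ) + 1) * k.factorial := by
    rw [Nat.factorial_succ]; push_cast; ring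
  have hpow : (x / 2) ^ (2 * k) = x ^ (2 * k) / 4 ^ k := by
    rw [div_pow, show (2:ℝ) ^ (2 * k) = 4 ^ k by rw [pow_mul]; norm_num]
  have hxS : x = 2 * S ^ 2 := by rw [hS2]; ring
  rw [hfacs, hfac1, hpow]
  rw [show x ^ (2 * k + 1) = x ^ (2 * k) * x by ring, hxS]
  have h4 : (4:ℝ) ^ (k + 1) = 4 * 4 ^ k := by ring
  push_cast [h4]
  have hkfac : (k.factorial : ℝ) ≠ 0 := by positivity
  have h2k1 : ((2 * k + 1).factorial : ℝ) ≠ 0 := by positivity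
  field_simp
  ring

lemma besselI_neg_half (hx : 0 < x) :
    besselI (-(1 / 2)) x = Real.sqrt (2 / (Real.pi * x)) * Real.cosh x := by
  have hx2 : (0:ℝ) < x / 2 := by linarith
  have hπ : (0:ℝ) < Real.pi := Real.pi_pos
  set S := Real.sqrt (x / 2) with hSdef
  have hS : 0 < S := Real.sqrt_pos.mpr hx2
  have hS2 : S ^ 2 = x / 2 := Real.sq_sqrt (le_of_lt hx2)
  have hb : 0 < Real.sqrt Real.pi := Real.sqrt_pos.mpr hπ
  rw [besselI_eq_tsum, Real.cosh_tsum, ← tsum_mul_left]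
  apply tsum_congr
  intro k
  unfold bterm
  have hsplit : (x / 2) ^ (2 * (k : ℝ) + -(1 / 2)) = (x / 2) ^ (2 * k) / S := by
    rw [show 2 * (k : ℝ) + -(1 / 2) = ((2 * k : ℕ) : ℝ) + -(1 / 2) by push_cast; ring,
      Real.rpow_add hx2, Real.rpow_natCast, Real.rpow_neg (le_of_lt hx2), ← Real.sqrt_eq_rpow,
      ← hSdef]
    ring
  rw [show (k : ℝ) + -(1 / 2) + 1 = ((k : ℕ) : ℝ) + 1 / 2 by push_cast; ring,
    Gamma_nat_add_half k, hsplit, sqrt_inv_rel hx, ← hSdef]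
  have hpow : (x / 2) ^ (2 * k) = x ^ (2 * k) / 4 ^ k := by
    rw [div_pow, show (2:ℝ) ^ (2 * k) = 4 ^ k by rw [pow_mul]; norm_num]
  rw [hpow]
  have hkfac : (k.factorial : ℝ) ≠ 0 := by positivity
  have h2k : ((2 * k).factorial : ℝ) ≠ 0 := by positivity
  push_cast
  field_simp
end closed

noncomputable def Wf (ν x : ℝ) : ℝ :=
  besselI ν x * besselI (-1 - ν) x - besselI (ν + 1) x * besselI (-ν) x

lemma Wf_step {ν x : ℝ} (h : ∃ k : ℤ, ν = (k : ℝ) + 1 / 2) (hx : 0 < x) :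
    Wf (ν + 1) x = -Wf ν x := by
  have hxne : x ≠ 0 := ne_of_gt hx
  have r1 : besselI ν x = 2 * (ν + 1) / x * besselI (ν + 1) x + besselI (ν + 2) x := by
    have := besselI_rec (ν := ν + 1) (halfint_shift h 1 (by push_cast; ring)) hx
    rw [show ν + 1 - 1 = ν by ring, show ν + 1 + 1 = ν + 2 by ring] at this
    exact this
  have hneg : ∃ k : ℤ, -1 - ν = (k : ℝ) + 1 / 2 := by
    obtain ⟨j, hj⟩ := h; exact ⟨-j - 2, by rw [hj]; push_cast; ring⟩
  have r2 : besselI (-2 - ν) x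
      = 2 * (-1 - ν) / x * besselI (-1 - ν) x + besselI (-ν) x := by
    have := besselI_rec (ν := -1 - ν) hneg hx
    rw [show -1 - ν - 1 = -2 - ν by ring, show -1 - ν + 1 = -ν by ring] at this
    exact this
  unfold Wf
  rw [show -1 - (ν + 1) = -2 - ν by ring, show ν + 1 + 1 = ν + 2 by ring,
    show -(ν + 1) = -1 - ν by ring]
  linear_combination besselI (ν + 1) x * r2 + besselI (-1 - ν) x * r1

lemma Wf_neg_half {x : ℝ} (hx : 0 < x) : Wf (-(1 / 2)) x = 2 / (Real.pi * x) := by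
  have hπ : (0:ℝ) < Real.pi := Real.pi_pos
  have hc : (0:ℝ) ≤ 2 / (Real.pi * x) := by positivity
  unfold Wf
  rw [show -1 - -(1 / 2 : ℝ) = -(1 / 2) by ring, show -(1 / 2 : ℝ) + 1 = 1 / 2 by ring,
    show -(-(1 / 2 : ℝ)) = 1 / 2 by ring, besselI_half hx, besselI_neg_half hx]
  have hsq : Real.sqrt (2 / (Real.pi * x)) ^ 2 = 2 / (Real.pi * x) := Real.sq_sqrt hc
  have hch := Real.cosh_sq_sub_sinh_sq x
  linear_combination (Real.sqrt (2 / (Real.pi * x))) ^ 2 * hch + hsq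
    - hsq * (Real.cosh x ^ 2 - Real.sinh x ^ 2 - 1) * 0

lemma Wf_val {x : ℝ} (hx : 0 < x) (k : ℤ) :
    Wf ((k : ℝ) + 1 / 2) x = (-1 : ℝ) ^ (k + 1) * (2 / (Real.pi * x)) := by
  induction k using Int.induction_on with
  | zero =>
      rw [show ((0 : ℤ) : ℝ) + 1 / 2 = -(1 / 2) + 1 by norm_num,
        Wf_step ⟨-1, by norm_num⟩ hx, Wf_neg_half hx]
      norm_num
  | succ i hi =>
      rw [show ((i + 1 : ℤ) : ℝ) + 1 / 2 = ((i : ℤ) : ℝ) + 1 / 2 + 1 by push_cast; ring,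
        Wf_step ⟨i, rfl⟩ hx, hi]
      have he : ((-1 : ℝ)) ^ (((i : ℕ) + 1 : ℤ) + 1) = -((-1 : ℝ)) ^ ((i : ℤ) + 1) := by
        rw [show (((i : ℕ) + 1 : ℤ) + 1) = ((i : ℤ) + 1) + 1 by push_cast; ring,
          zpow_add_one₀ (by norm_num : (-1 : ℝ) ≠ 0)]
        ring
      rw [he]
      ring
  | pred i hi =>
      have hstep := Wf_step (ν := ((-i - 1 : ℤ) : ℝ) + 1 / 2) ⟨-i - 1, rfl⟩ hx
      rw [show (((-i - 1 : ℤ) : ℝ) + 1 / 2) + 1 = ((-i : ℤ) : ℝ) + 1 / 2 by push_cast; ring,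
        hi] at hstep
      have hz : ((-1 : ℝ)) ^ ((-i : ℤ) + 1) = -((-1 : ℝ)) ^ (-i - 1 + 1 : ℤ) := by
        rw [show ((-i : ℤ) + 1) = ((-i - 1 + 1 : ℤ)) + 1 by ring,
          zpow_add_one₀ (by norm_num : (-1 : ℝ) ≠ 0)]
        ring
      rw [hz] at hstep
      linarith

lemma key_const {m r ν₁ ν₂ : ℝ} (hm : m ≠ 0) (hr : 0 < r) (k₁ : ℤ)
    (hk₁ : ν₁ = (k₁ : ℝ) + 1 / 2) (hsum : ν₁ + ν₂ = -1) :
    Real.Gamma (ν₁ + 1) / |m| ^ ν₁ * (Real.Gamma (ν₂ + 1) / |m| ^ ν₂) * r *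
      (besselI ν₁ (2 * |m| * r) * besselI ν₂ (2 * |m| * r)
        - besselI (ν₁ + 1) (2 * |m| * r) * besselI (ν₂ + 1) (2 * |m| * r)) = 1 := by
  have hma : (0 : ℝ) < |m| := abs_pos.mpr hm
  have hx : (0 : ℝ) < 2 * |m| * r := by positivity
  have hπ : (0 : ℝ) < Real.pi := Real.pi_pos
  have hν₂ : ν₂ = -1 - ν₁ := by linarith
  -- the Bessel bracket is the Wronskian
  have hW : besselI ν₁ (2 * |m| * r) * besselI ν₂ (2 * |m| * r)
      - besselI (ν₁ + 1) (2 * |m| * r) * besselI (ν₂ + 1) (2 * |m| * r)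
      = (-1 : ℝ) ^ (k₁ + 1) * (2 / (Real.pi * (2 * |m| * r))) := by
    rw [hν₂, show -1 - ν₁ + 1 = -ν₁ by ring, ← Wf]
    rw [hk₁]
    exact Wf_val hx k₁
  -- the Gamma product
  have hsin : Real.sin (Real.pi * (ν₁ + 1)) = (-1 : ℝ) ^ (k₁ + 1) := by
    rw [hk₁, show Real.pi * ((k₁ : ℝ) + 1 / 2 + 1) = Real.pi / 2 + ((k₁ + 1 : ℤ) : ℝ) * Real.pi by
      push_cast; ring, Real.sin_add_int_mul_pi]
    simp [Real.sin_pi_div_two]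
  have hG : Real.Gamma (ν₁ + 1) * Real.Gamma (ν₂ + 1) = Real.pi / (-1 : ℝ) ^ (k₁ + 1) := by
    rw [show ν₂ + 1 = 1 - (ν₁ + 1) by linarith, Real.Gamma_mul_Gamma_one_sub, hsin]
  -- the power product
  have hpow : |m| ^ ν₁ * |m| ^ ν₂ = |m|⁻¹ := by
    rw [← Real.rpow_add hma, hsum, Real.rpow_neg_one]
  have hz : ((-1 : ℝ) ^ (k₁ + 1)) * ((-1 : ℝ) ^ (k₁ + 1)) = 1 := by
    rw [← zpow_add₀ (by norm_num : (-1 : ℝ) ≠ 0), show (k₁ + 1) + (k₁ + 1) = 2 * (k₁ + 1) by ring,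
      zpow_mul]
    norm_num
  have hzne : ((-1 : ℝ) ^ (k₁ + 1)) ≠ 0 := by
    intro hc
    rw [hc, mul_zero] at hz
    norm_num at hz
  have hp1 : |m| ^ ν₁ ≠ 0 := by positivity
  have hp2 : |m| ^ ν₂ ≠ 0 := by positivity
  rw [hW]
  rw [div_mul_div_comm, hG, hpow]
  set z := ((-1 : ℝ) ^ (k₁ + 1)) with hzdef
  field_simp


lemma integral_exp_int (n : ℤ) :
    ∫ θ in (0:ℝ)..(2*Real.pi), Complex.exp (Complex.I * (n : ℂ) * (θ : ℂ))
      = ((if n = 0 then 2*Real.pi else 0 : ℝ) : ℂ) := by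
  rcases eq_or_ne n 0 with h | h
  · subst h
    simp only [Int.cast_zero, mul_zero, zero_mul, Complex.exp_zero, if_pos rfl]
    rw [intervalIntegral.integral_const]
    push_cast
    ring_nf
    simp
  · rw [if_neg h]
    have hc : Complex.I * (n : ℂ) ≠ 0 := by
      simp [Complex.I_ne_zero, Int.cast_ne_zero, h]
    have key := integral_exp_mul_complex (a := (0:ℝ)) (b := 2*Real.pi) hc
    have : (fun θ : ℝ => Complex.exp (Complex.I * (n : ℂ) * (θ : ℂ)))
        = fun θ : ℝ => Complex.exp (Complex.I * (n : ℂ) * (θ : ℂ)) := rfl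
    rw [show (∫ θ in (0:ℝ)..(2*Real.pi), Complex.exp (Complex.I * (n : ℂ) * (θ : ℂ)))
        = ∫ θ in (0:ℝ)..(2*Real.pi), Complex.exp ((Complex.I * (n : ℂ)) * (θ : ℂ)) by
      congr 1]
    rw [key]
    rw [show (Complex.I * (n : ℂ)) * ((2*Real.pi : ℝ) : ℂ) = (n : ℂ) * (2 * Real.pi * Complex.I) by
      push_cast; ring]
    rw [Complex.exp_int_mul_two_pi_mul_I]
    simp

lemma integral_expand (ν₁ ν₂ : ℝ) (a b : ℤ) (ha : ν₁ + ν₂ + 1 = (a : ℝ))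
    (hb : ν₁ - ν₂ = (b : ℝ)) (w x₁ y₁ x₂ y₂ : ℂ) :
    (∫ θ in (0:ℝ)..(2*Real.pi),
      w * ((Complex.exp (Complex.I * (ν₁ : ℂ) * (θ : ℂ)) * x₁
              + y₁ * Complex.exp (-Complex.I * ((ν₁ : ℂ) + 1) * (θ : ℂ)))
          * (Complex.exp (Complex.I * (ν₂ : ℂ) * (θ : ℂ)) * x₂
              + y₂ * Complex.exp (-Complex.I * ((ν₂ : ℂ) + 1) * (θ : ℂ)))
          * Complex.exp (Complex.I * (θ : ℂ))))
    = w * (x₁ * x₂ * ((if a = 0 then 2*Real.pi else 0 : ℝ) : ℂ)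
        + x₁ * y₂ * ((if b = 0 then 2*Real.pi else 0 : ℝ) : ℂ)
        + y₁ * x₂ * ((if (-b) = 0 then 2*Real.pi else 0 : ℝ) : ℂ)
        + y₁ * y₂ * ((if (-a) = 0 then 2*Real.pi else 0 : ℝ) : ℂ)) := by
  have haC : (ν₁ : ℂ) + (ν₂ : ℂ) + 1 = ((a : ℤ) : ℂ) := by exact_mod_cast congrArg Complex.ofReal ha
  have hbC : (ν₁ : ℂ) - (ν₂ : ℂ) = ((b : ℤ) : ℂ) := by exact_mod_cast congrArg Complex.ofReal hb
  have key : ∀ θ : ℝ,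
      w * ((Complex.exp (Complex.I * (ν₁ : ℂ) * (θ : ℂ)) * x₁
              + y₁ * Complex.exp (-Complex.I * ((ν₁ : ℂ) + 1) * (θ : ℂ)))
          * (Complex.exp (Complex.I * (ν₂ : ℂ) * (θ : ℂ)) * x₂
              + y₂ * Complex.exp (-Complex.I * ((ν₂ : ℂ) + 1) * (θ : ℂ)))
          * Complex.exp (Complex.I * (θ : ℂ)))
      = w * x₁ * x₂ * Complex.exp (Complex.I * ((a : ℤ) : ℂ) * (θ : ℂ))
        + w * x₁ * y₂ * Complex.exp (Complex.I * ((b : ℤ) : ℂ) * (θ : ℂ))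
        + w * y₁ * x₂ * Complex.exp (Complex.I * (((-b : ℤ)) : ℂ) * (θ : ℂ))
        + w * y₁ * y₂ * Complex.exp (Complex.I * (((-a : ℤ)) : ℂ) * (θ : ℂ)) := by
    intro θ
    have f1 : Complex.exp (Complex.I * ((a : ℤ) : ℂ) * (θ : ℂ))
        = Complex.exp (Complex.I * (ν₁ : ℂ) * (θ : ℂ))
          * Complex.exp (Complex.I * (ν₂ : ℂ) * (θ : ℂ))
          * Complex.exp (Complex.I * (θ : ℂ)) := by
      rw [← Complex.exp_add, ← Complex.exp_add]
      congr 1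
      linear_combination Complex.I * (θ : ℂ) * haC.symm
    have f2 : Complex.exp (Complex.I * ((b : ℤ) : ℂ) * (θ : ℂ))
        = Complex.exp (Complex.I * (ν₁ : ℂ) * (θ : ℂ))
          * Complex.exp (-Complex.I * ((ν₂ : ℂ) + 1) * (θ : ℂ))
          * Complex.exp (Complex.I * (θ : ℂ)) := by
      rw [← Complex.exp_add, ← Complex.exp_add]
      congr 1
      linear_combination Complex.I * (θ : ℂ) * hbC.symm
    have f3 : Complex.exp (Complex.I * (((-b : ℤ)) : ℂ) * (θ : ℂ))
        = Complex.exp (-Complex.I * ((ν₁ : ℂ) + 1) * (θ : ℂ))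
          * Complex.exp (Complex.I * (ν₂ : ℂ) * (θ : ℂ))
          * Complex.exp (Complex.I * (θ : ℂ)) := by
      rw [← Complex.exp_add, ← Complex.exp_add]
      congr 1
      push_cast
      linear_combination -Complex.I * (θ : ℂ) * hbC.symm
    have f4 : Complex.exp (Complex.I * (((-a : ℤ)) : ℂ) * (θ : ℂ))
        = Complex.exp (-Complex.I * ((ν₁ : ℂ) + 1) * (θ : ℂ))
          * Complex.exp (-Complex.I * ((ν₂ : ℂ) + 1) * (θ : ℂ))
          * Complex.exp (Complex.I * (θ : ℂ)) := by
      rw [← Complex.exp_add, ← Complex.exp_add]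
      congr 1
      push_cast
      linear_combination -Complex.I * (θ : ℂ) * haC.symm
    rw [f1, f2, f3, f4]
    ring
  rw [funext key]
  have hint : ∀ (c : ℂ) (n : ℤ), IntervalIntegrable
      (fun θ : ℝ => c * Complex.exp (Complex.I * (n : ℂ) * (θ : ℂ)))
      MeasureTheory.volume 0 (2*Real.pi) := by
    intro c n
    apply Continuous.intervalIntegrable
    fun_prop
  rw [intervalIntegral.integral_add (((hint _ a).add (hint _ b)).add (hint _ (-b))) (hint _ (-a)),
    intervalIntegral.integral_add ((hint _ a).add (hint _ b)) (hint _ (-b)),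
    intervalIntegral.integral_add (hint _ a) (hint _ b),
    intervalIntegral.integral_const_mul, intervalIntegral.integral_const_mul,
    intervalIntegral.integral_const_mul, intervalIntegral.integral_const_mul,
    integral_exp_int a, integral_exp_int b, integral_exp_int (-b), integral_exp_int (-a)]
  ring


/-- The massive formal power `Ẑ^s_ν(r,θ)` lifted to the double cover: for `s = true`
this is `Ẑ¹_ν(r,θ) = (Γ(ν+1)/|m|^ν)(e^{iνθ}I_ν(2|m|r) + sgn(m)e^{−i(ν+1)θ}I_{ν+1}(2|m|r))`,
and for `s = false` it is
`Ẑⁱ_ν(r,θ) = i(Γ(ν+1)/|m|^ν)(e^{iνθ}I_ν(2|m|r) − sgn(m)e^{−i(ν+1)θ}I_{ν+1}(2|m|r))`. -/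
noncomputable def Zhat (m ν : ℝ) (s : Bool) (r θ : ℝ) : ℂ :=
  if s then
    ((Real.Gamma (ν + 1) / |m| ^ ν : ℝ) : ℂ) *
      (Complex.exp (Complex.I * (ν : ℂ) * (θ : ℂ)) * (besselI ν (2 * |m| * r) : ℂ) +
        (Real.sign m : ℂ) * Complex.exp (-Complex.I * ((ν : ℂ) + 1) * (θ : ℂ)) *
          (besselI (ν + 1) (2 * |m| * r) : ℂ))
  else
    Complex.I * ((Real.Gamma (ν + 1) / |m| ^ ν : ℝ) : ℂ) *
      (Complex.exp (Complex.I * (ν : ℂ) * (θ : ℂ)) * (besselI ν (2 * |m| * r) : ℂ) -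
        (Real.sign m : ℂ) * Complex.exp (-Complex.I * ((ν : ℂ) + 1) * (θ : ℂ)) *
          (besselI (ν + 1) (2 * |m| * r) : ℂ))

/-- Half-integer residue pairing: the real part of the contour integral
`∮_{|z|=r}` of a product of two massive formal powers (lifted to the double cover)
equals `−2π` when `ν₁+ν₂ = −1` and the two types are `{1, i}` in either order, and
`0` in all other cases; in particular it is independent of `r`. -/
theorem stmt5 (m : ℝ) (hm : m ≠ 0) (ν₁ ν₂ : ℝ)
    (h₁ : ∃ k : ℤ, ν₁ = (k : ℝ) + 1 / 2) (h₂ : ∃ k : ℤ, ν₂ = (k : ℝ) + 1 / 2)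
    (s s' : Bool) :
    ∀ r : ℝ, 0 < r →
      (∫ θ in (0 : ℝ)..(2 * Real.pi),
          Zhat m ν₁ s r θ * Zhat m ν₂ s' r θ * Complex.I * (r : ℂ) *
            Complex.exp (Complex.I * (θ : ℂ))).re =
        if ν₁ + ν₂ = -1 ∧ s ≠ s' then -(2 * Real.pi) else 0 := by
  intro r hr
  obtain ⟨k₁, hk₁⟩ := h₁
  obtain ⟨k₂, hk₂⟩ := h₂
  have hma : (0:ℝ) < |m| := abs_pos.mpr hm
  have hx : (0:ℝ) < 2 * |m| * r := by positivity
  have ha : ν₁ + ν₂ + 1 = ((k₁ + k₂ + 2 : ℤ) : ℝ) := by rw [hk₁, hk₂]; push_cast; ring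
  have hb : ν₁ - ν₂ = ((k₁ - k₂ : ℤ) : ℝ) := by rw [hk₁, hk₂]; push_cast; ring
  have hacond : (ν₁ + ν₂ = -1) ↔ (k₁ + k₂ + 2 : ℤ) = 0 := by
    constructor
    · intro h
      have h2 : ((k₁ + k₂ + 2 : ℤ) : ℝ) = 0 := by linarith
      exact_mod_cast h2
    · intro h
      have h2 : ((k₁ + k₂ + 2 : ℤ) : ℝ) = 0 := by exact_mod_cast h
      linarith
  have hbcond : (k₁ - k₂ : ℤ) = 0 → ν₂ = ν₁ := by
    intro h
    have h2 : ((k₁ - k₂ : ℤ) : ℝ) = 0 := by exact_mod_cast h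
    linarith
  have hσ2 : Real.sign m * Real.sign m = 1 := by
    rcases lt_or_gt_of_ne hm with h | h
    · rw [Real.sign_of_neg h]; norm_num
    · rw [Real.sign_of_pos h]; norm_num
  have hkey : ν₁ + ν₂ = -1 →
      Real.Gamma (ν₁ + 1) / |m| ^ ν₁ * (Real.Gamma (ν₂ + 1) / |m| ^ ν₂) * r *
        (besselI ν₁ (2 * |m| * r) * besselI ν₂ (2 * |m| * r)
          - besselI (ν₁ + 1) (2 * |m| * r) * besselI (ν₂ + 1) (2 * |m| * r)) = 1 :=
    fun hs => key_const hm hr k₁ hk₁ hs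
  cases s <;> cases s'
  · -- s = false, s' = false
    have hfun : (fun θ : ℝ => Zhat m ν₁ false r θ * Zhat m ν₂ false r θ * Complex.I * (r:ℂ) *
          Complex.exp (Complex.I * (θ:ℂ)))
        = fun θ : ℝ =>
          (Complex.I * ((Real.Gamma (ν₁ + 1) / |m| ^ ν₁ : ℝ) : ℂ)
              * (Complex.I * ((Real.Gamma (ν₂ + 1) / |m| ^ ν₂ : ℝ) : ℂ))
              * Complex.I * (r : ℂ)) *
          ((Complex.exp (Complex.I * (ν₁ : ℂ) * (θ : ℂ)) * ((besselI ν₁ (2 * |m| * r) : ℝ) : ℂ)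
              + (-(((Real.sign m : ℝ) : ℂ) * ((besselI (ν₁ + 1) (2 * |m| * r) : ℝ) : ℂ)))
                * Complex.exp (-Complex.I * ((ν₁ : ℂ) + 1) * (θ : ℂ)))
            * (Complex.exp (Complex.I * (ν₂ : ℂ) * (θ : ℂ)) * ((besselI ν₂ (2 * |m| * r) : ℝ) : ℂ)
              + (-(((Real.sign m : ℝ) : ℂ) * ((besselI (ν₂ + 1) (2 * |m| * r) : ℝ) : ℂ)))
                * Complex.exp (-Complex.I * ((ν₂ : ℂ) + 1) * (θ : ℂ)))
            * Complex.exp (Complex.I * (θ : ℂ))) := by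
      funext θ
      simp only [Zhat, if_neg Bool.false_ne_true]
      ring
    rw [hfun, integral_expand ν₁ ν₂ (k₁ + k₂ + 2) (k₁ - k₂) ha hb]
    simp only [ne_eq, not_true_eq_false, and_false, if_false]
    simp [Complex.mul_re, Complex.mul_im, Complex.add_re, Complex.add_im]
  · -- s = false, s' = true
    have hfun : (fun θ : ℝ => Zhat m ν₁ false r θ * Zhat m ν₂ true r θ * Complex.I * (r:ℂ) *
          Complex.exp (Complex.I * (θ:ℂ)))
        = fun θ : ℝ =>
          ((Complex.I * ((Real.Gamma (ν₁ + 1) / |m| ^ ν₁ : ℝ) : ℂ))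
              * ((Real.Gamma (ν₂ + 1) / |m| ^ ν₂ : ℝ) : ℂ)
              * Complex.I * (r : ℂ)) *
          ((Complex.exp (Complex.I * (ν₁ : ℂ) * (θ : ℂ)) * ((besselI ν₁ (2 * |m| * r) : ℝ) : ℂ)
              + (-(((Real.sign m : ℝ) : ℂ) * ((besselI (ν₁ + 1) (2 * |m| * r) : ℝ) : ℂ)))
                * Complex.exp (-Complex.I * ((ν₁ : ℂ) + 1) * (θ : ℂ)))
            * (Complex.exp (Complex.I * (ν₂ : ℂ) * (θ : ℂ)) * ((besselI ν₂ (2 * |m| * r) : ℝ) : ℂ)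
              + (((Real.sign m : ℝ) : ℂ) * ((besselI (ν₂ + 1) (2 * |m| * r) : ℝ) : ℂ))
                * Complex.exp (-Complex.I * ((ν₂ : ℂ) + 1) * (θ : ℂ)))
            * Complex.exp (Complex.I * (θ : ℂ))) := by
      funext θ
      simp only [Zhat, if_true, if_neg Bool.false_ne_true]
      ring
    rw [hfun, integral_expand ν₁ ν₂ (k₁ + k₂ + 2) (k₁ - k₂) ha hb]
    simp only [ne_eq, neg_eq_zero, Bool.false_eq_true, not_false_eq_true, and_true,
      Complex.mul_re, Complex.mul_im, Complex.add_re, Complex.add_im,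
      Complex.I_re, Complex.I_im, Complex.ofReal_re, Complex.ofReal_im,
      Complex.neg_re, Complex.neg_im]
    by_cases hs : ν₁ + ν₂ = -1
    · have haz : (k₁ + k₂ + 2 : ℤ) = 0 := hacond.mp hs
      have hk := hkey hs
      simp only [if_pos hs, if_pos haz]
      by_cases hbz : (k₁ - k₂ : ℤ) = 0
      · have hν : ν₂ = ν₁ := hbcond hbz
        simp only [if_pos hbz]
        rw [hν] at hk ⊢
        linear_combination (-(2*Real.pi)) * hk
          + (2*Real.pi * (Real.Gamma (ν₁ + 1) / |m| ^ ν₁) * (Real.Gamma (ν₁ + 1) / |m| ^ ν₁) * r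
              * besselI (ν₁ + 1) (2 * |m| * r) * besselI (ν₁ + 1) (2 * |m| * r)) * hσ2
      · simp only [if_neg hbz]
        linear_combination (-(2*Real.pi)) * hk
          + (2*Real.pi * (Real.Gamma (ν₁ + 1) / |m| ^ ν₁) * (Real.Gamma (ν₂ + 1) / |m| ^ ν₂) * r
              * besselI (ν₁ + 1) (2 * |m| * r) * besselI (ν₂ + 1) (2 * |m| * r)) * hσ2
    · have haz : (k₁ + k₂ + 2 : ℤ) ≠ 0 := fun hc => hs (hacond.mpr hc)
      simp only [if_neg hs, if_neg haz]
      by_cases hbz : (k₁ - k₂ : ℤ) = 0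
      · have hν : ν₂ = ν₁ := hbcond hbz
        simp only [if_pos hbz]
        rw [hν]
        ring
      · simp only [if_neg hbz]
        ring
  · -- s = true, s' = false
    have hfun : (fun θ : ℝ => Zhat m ν₁ true r θ * Zhat m ν₂ false r θ * Complex.I * (r:ℂ) *
          Complex.exp (Complex.I * (θ:ℂ)))
        = fun θ : ℝ =>
          (((Real.Gamma (ν₁ + 1) / |m| ^ ν₁ : ℝ) : ℂ)
              * (Complex.I * ((Real.Gamma (ν₂ + 1) / |m| ^ ν₂ : ℝ) : ℂ))
              * Complex.I * (r : ℂ)) *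
          ((Complex.exp (Complex.I * (ν₁ : ℂ) * (θ : ℂ)) * ((besselI ν₁ (2 * |m| * r) : ℝ) : ℂ)
              + (((Real.sign m : ℝ) : ℂ) * ((besselI (ν₁ + 1) (2 * |m| * r) : ℝ) : ℂ))
                * Complex.exp (-Complex.I * ((ν₁ : ℂ) + 1) * (θ : ℂ)))
            * (Complex.exp (Complex.I * (ν₂ : ℂ) * (θ : ℂ)) * ((besselI ν₂ (2 * |m| * r) : ℝ) : ℂ)
              + (-(((Real.sign m : ℝ) : ℂ) * ((besselI (ν₂ + 1) (2 * |m| * r) : ℝ) : ℂ)))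
                * Complex.exp (-Complex.I * ((ν₂ : ℂ) + 1) * (θ : ℂ)))
            * Complex.exp (Complex.I * (θ : ℂ))) := by
      funext θ
      simp only [Zhat, if_true, if_neg Bool.false_ne_true]
      ring
    rw [hfun, integral_expand ν₁ ν₂ (k₁ + k₂ + 2) (k₁ - k₂) ha hb]
    simp only [ne_eq, neg_eq_zero, Bool.true_eq_false, not_false_eq_true, and_true,
      Complex.mul_re, Complex.mul_im, Complex.add_re, Complex.add_im,
      Complex.I_re, Complex.I_im, Complex.ofReal_re, Complex.ofReal_im,
      Complex.neg_re, Complex.neg_im]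
    by_cases hs : ν₁ + ν₂ = -1
    · have haz : (k₁ + k₂ + 2 : ℤ) = 0 := hacond.mp hs
      have hk := hkey hs
      simp only [if_pos hs, if_pos haz]
      by_cases hbz : (k₁ - k₂ : ℤ) = 0
      · have hν : ν₂ = ν₁ := hbcond hbz
        simp only [if_pos hbz]
        rw [hν] at hk ⊢
        linear_combination (-(2*Real.pi)) * hk
          + (2*Real.pi * (Real.Gamma (ν₁ + 1) / |m| ^ ν₁) * (Real.Gamma (ν₁ + 1) / |m| ^ ν₁) * r
              * besselI (ν₁ + 1) (2 * |m| * r) * besselI (ν₁ + 1) (2 * |m| * r)) * hσ2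
      · simp only [if_neg hbz]
        linear_combination (-(2*Real.pi)) * hk
          + (2*Real.pi * (Real.Gamma (ν₁ + 1) / |m| ^ ν₁) * (Real.Gamma (ν₂ + 1) / |m| ^ ν₂) * r
              * besselI (ν₁ + 1) (2 * |m| * r) * besselI (ν₂ + 1) (2 * |m| * r)) * hσ2
    · have haz : (k₁ + k₂ + 2 : ℤ) ≠ 0 := fun hc => hs (hacond.mpr hc)
      simp only [if_neg hs, if_neg haz]
      by_cases hbz : (k₁ - k₂ : ℤ) = 0
      · have hν : ν₂ = ν₁ := hbcond hbz
        simp only [if_pos hbz]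
        rw [hν]
        ring
      · simp only [if_neg hbz]
        ring
  · -- s = true, s' = true
    have hfun : (fun θ : ℝ => Zhat m ν₁ true r θ * Zhat m ν₂ true r θ * Complex.I * (r:ℂ) *
          Complex.exp (Complex.I * (θ:ℂ)))
        = fun θ : ℝ =>
          (((Real.Gamma (ν₁ + 1) / |m| ^ ν₁ : ℝ) : ℂ) * ((Real.Gamma (ν₂ + 1) / |m| ^ ν₂ : ℝ) : ℂ)
              * Complex.I * (r : ℂ)) *
          ((Complex.exp (Complex.I * (ν₁ : ℂ) * (θ : ℂ)) * ((besselI ν₁ (2 * |m| * r) : ℝ) : ℂ)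
              + ((Real.sign m : ℝ) : ℂ) * ((besselI (ν₁ + 1) (2 * |m| * r) : ℝ) : ℂ)
                * Complex.exp (-Complex.I * ((ν₁ : ℂ) + 1) * (θ : ℂ)))
            * (Complex.exp (Complex.I * (ν₂ : ℂ) * (θ : ℂ)) * ((besselI ν₂ (2 * |m| * r) : ℝ) : ℂ)
              + ((Real.sign m : ℝ) : ℂ) * ((besselI (ν₂ + 1) (2 * |m| * r) : ℝ) : ℂ)
                * Complex.exp (-Complex.I * ((ν₂ : ℂ) + 1) * (θ : ℂ)))
            * Complex.exp (Complex.I * (θ : ℂ))) := by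
      funext θ
      simp only [Zhat, if_true]
      ring
    rw [hfun, integral_expand ν₁ ν₂ (k₁ + k₂ + 2) (k₁ - k₂) ha hb]
    simp only [ne_eq, not_true_eq_false, and_false, if_false]
    simp [Complex.mul_re, Complex.mul_im, Complex.add_re, Complex.add_im]
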